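/- Let f : ℍ^{N×S} → ℝ be ℝ-differentiable at Q. Then for every H ∈ ℍ^{N×S}, |Df(Q)[H]| ≤ 4 · (Σ_{n,s} |(∂f/∂q_{ns})(Q)|²)^{1/2} · (Σ_{n,s} |H_{ns}|²)^{1/2}, where Df(Q)[H] is the real Fréchet derivative of f at Q applied to H; moreover equality holds for the direction H with entries H_{ns} = ((∂f/∂q_{ns})(Q))^{*}, in which case Df(Q)[H] = 4 · Σ_{n,s} |(∂f/∂q_{ns})(Q)|². Thus the conjugate gradient ((∂f/∂Q)(Q))^{*} gives the direction of the maximum rate of change of f. -/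

import Mathlib

open scoped Quaternion

noncomputable section

/-- The imaginary unit `i` of the quaternions. -/
def qI : ℍ[ℝ] := ⟨0, 1, 0, 0⟩
/-- The imaginary unit `j` of the quaternions. -/
def qJ : ℍ[ℝ] := ⟨0, 0, 1, 0⟩
/-- The imaginary unit `k` of the quaternions. -/
def qK : ℍ[ℝ] := ⟨0, 0, 0, 1⟩

/-- The `N × S` quaternion matrix with entry `d` at position `(n,s)` and `0` elsewhere. -/
def single {N S : ℕ} (n : Fin N) (s : Fin S) (d : ℍ[ℝ]) : Fin N → Fin S → ℍ[ℝ] :=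
  Pi.single n (Pi.single s d)

/-- Real directional (Fréchet) derivative of a real-valued function of a matrix variable, in
the direction `d` at the single entry `(n,s)` (the other entries held fixed). -/
def pdR {N S : ℕ} (f : (Fin N → Fin S → ℍ[ℝ]) → ℝ) (Q : Fin N → Fin S → ℍ[ℝ])
    (n : Fin N) (s : Fin S) (d : ℍ[ℝ]) : ℝ :=
  fderiv ℝ f Q (single n s d)

/-- Left GHR derivative `∂f/∂q_{ns}^ν` of a real-valued function `f` with respect to the entry
`q_{ns}`: `¼(∂f/∂q_a − (∂f/∂q_b) i^ν − (∂f/∂q_c) j^ν − (∂f/∂q_d) k^ν)`, `x^ν = ν x ν⁻¹`. -/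
def ghrER {N S : ℕ} (ν : ℍ[ℝ]) (f : (Fin N → Fin S → ℍ[ℝ]) → ℝ)
    (Q : Fin N → Fin S → ℍ[ℝ]) (n : Fin N) (s : Fin S) : ℍ[ℝ] :=
  (1 / 4 : ℝ) • ((pdR f Q n s 1) • (1 : ℍ[ℝ]) - (pdR f Q n s qI) • (ν * qI * ν⁻¹)
    - (pdR f Q n s qJ) • (ν * qJ * ν⁻¹) - (pdR f Q n s qK) • (ν * qK * ν⁻¹))

/-- Conjugate left GHR derivative `∂f/∂q_{ns}^{ν*}` of a real-valued function `f`. -/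
def ghrStarER {N S : ℕ} (ν : ℍ[ℝ]) (f : (Fin N → Fin S → ℍ[ℝ]) → ℝ)
    (Q : Fin N → Fin S → ℍ[ℝ]) (n : Fin N) (s : Fin S) : ℍ[ℝ] :=
  (1 / 4 : ℝ) • ((pdR f Q n s 1) • (1 : ℍ[ℝ]) + (pdR f Q n s qI) • (ν * qI * ν⁻¹)
    + (pdR f Q n s qJ) • (ν * qJ * ν⁻¹) + (pdR f Q n s qK) • (ν * qK * ν⁻¹))

/-! The restriction of `Df(Q)` to the entry `(n, s)` is a real-linear functional `ℓ` on `ℍ ≅ ℝ⁴`,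
and with `g = ∂f/∂q_{ns}` one has `ℓ d = 4 Re(g d) = 4 ⟪g*, d⟫`. Summing over the entries,
`Df(Q)[H] = 4 ∑ ⟪g*_{ns}, H_{ns}⟫`, so the Cauchy–Schwarz inequality in `ℍ^{N×S}` gives the
bound, and the choice `H = g*` gives the value `4 ∑ ‖g_{ns}‖²`. -/

open scoped RealInnerProductSpace

theorem abs_sum_inner_le_sqrt_mul_sqrt {ι E : Type*} [SeminormedAddCommGroup E]
    [InnerProductSpace ℝ E] (t : Finset ι) (a b : ι → E) :
    |∑ i ∈ t, ⟪a i, b i⟫| ≤ √(∑ i ∈ t, ‖a i‖ ^ 2) * √(∑ i ∈ t, ‖b i‖ ^ 2) :=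
  (Finset.abs_sum_le_sum_abs _ _).trans <|
    (Finset.sum_le_sum fun i _ => abs_real_inner_le_norm (a i) (b i)).trans <|
      Real.sum_mul_le_sqrt_mul_sqrt t _ _

theorem Quaternion.re_add_imI_add_imJ_add_imK (q : ℍ[ℝ]) :
    q.re • 1 + q.imI • qI + q.imJ • qJ + q.imK • qK = q := by
  ext <;> simp <;> simp [qI, qJ, qK]

/-- The left GHR derivative of a function whose real derivative at the point is `ℓ`. -/
def leftGHR (ℓ : ℍ[ℝ] →ₗ[ℝ] ℝ) : ℍ[ℝ] :=
  (1 / 4 : ℝ) • (ℓ 1 • 1 - ℓ qI • qI - ℓ qJ • qJ - ℓ qK • qK)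

theorem linearMap_apply_eq_four_mul_inner_star_leftGHR (ℓ : ℍ[ℝ] →ₗ[ℝ] ℝ) (q : ℍ[ℝ]) :
    ℓ q = 4 * ⟪star (leftGHR ℓ), q⟫ := by
  conv_lhs => rw [← q.re_add_imI_add_imJ_add_imK]
  simp only [leftGHR, Quaternion.inner_def, map_add, map_smul, smul_eq_mul, Quaternion.star_smul,
    star_sub, star_one, Algebra.smul_mul_assoc, Quaternion.re_smul, Quaternion.re_sub,
    Quaternion.re_mul, Quaternion.imI_sub, Quaternion.imI_smul, Quaternion.imJ_sub,
    Quaternion.imJ_smul, Quaternion.imK_sub, Quaternion.imK_smul, Quaternion.re_star,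
    Quaternion.imI_star, Quaternion.imJ_star, Quaternion.imK_star]
  simp only [qI, qJ, qK, Quaternion.re_one, Quaternion.imI_one, Quaternion.imJ_one,
    Quaternion.imK_one]
  ring

def entryMap {N S : ℕ} (n : Fin N) (s : Fin S) : ℍ[ℝ] →ₗ[ℝ] Fin N → Fin S → ℍ[ℝ] :=
  LinearMap.single ℝ (fun _ : Fin N => Fin S → ℍ[ℝ]) n ∘ₗ
    LinearMap.single ℝ (fun _ : Fin S => ℍ[ℝ]) s

theorem ghrER_one_eq_leftGHR {N S : ℕ} (f : (Fin N → Fin S → ℍ[ℝ]) → ℝ)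
    (Q : Fin N → Fin S → ℍ[ℝ]) (n : Fin N) (s : Fin S) :
    ghrER 1 f Q n s = leftGHR ((fderiv ℝ f Q).toLinearMap ∘ₗ entryMap n s) := by
  simp only [ghrER, leftGHR, pdR, inv_one, mul_one, one_mul]
  rfl

theorem fderiv_apply_eq_four_mul_sum_inner {N S : ℕ} (f : (Fin N → Fin S → ℍ[ℝ]) → ℝ)
    (Q H : Fin N → Fin S → ℍ[ℝ]) :
    fderiv ℝ f Q H = 4 * ∑ n, ∑ s, ⟪star (ghrER 1 f Q n s), H n s⟫ := by
  have hH : H = ∑ n, ∑ s, entryMap n s (H n s) := by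
    simp only [entryMap, LinearMap.comp_apply, ← map_sum]
    simp only [LinearMap.coe_single, Finset.univ_sum_single]
  conv_lhs => rw [hH]
  simp only [map_sum, Finset.mul_sum, ghrER_one_eq_leftGHR,
    ← linearMap_apply_eq_four_mul_inner_star_leftGHR]
  rfl

theorem max_rate_of_change_general {N S : ℕ}
    (f : (Fin N → Fin S → ℍ[ℝ]) → ℝ) (Q : Fin N → Fin S → ℍ[ℝ]) :
    (∀ H : Fin N → Fin S → ℍ[ℝ],
      |fderiv ℝ f Q H| ≤
        4 * Real.sqrt (∑ n, ∑ s, ‖ghrER (1 : ℍ[ℝ]) f Q n s‖ ^ 2)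
          * Real.sqrt (∑ n, ∑ s, ‖H n s‖ ^ 2))
    ∧ fderiv ℝ f Q (fun n s => star (ghrER (1 : ℍ[ℝ]) f Q n s)) =
        4 * ∑ n, ∑ s, ‖ghrER (1 : ℍ[ℝ]) f Q n s‖ ^ 2 := by
  refine ⟨fun H => ?_, ?_⟩
  · rw [fderiv_apply_eq_four_mul_sum_inner, abs_mul, abs_of_pos four_pos, mul_assoc]
    gcongr
    simpa only [Fintype.sum_prod_type, norm_star] using
      abs_sum_inner_le_sqrt_mul_sqrt Finset.univ
        (fun p : Fin N × Fin S => star (ghrER 1 f Q p.1 p.2)) (fun p => H p.1 p.2)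
  · simp only [fderiv_apply_eq_four_mul_sum_inner, real_inner_self_eq_norm_sq, norm_star]

/-- **Direction of maximum rate of change** (Theorem 4): for a real-valued
`f : ℍ^{N×S} → ℝ` differentiable at `Q` and any direction `H`,
`|Df(Q)[H]| ≤ 4 (Σ|∂f/∂q_{ns}|²)^{1/2} (Σ|H_{ns}|²)^{1/2}`, with equality in the direction
`H_{ns} = (∂f/∂q_{ns})*`, for which `Df(Q)[H] = 4 Σ|∂f/∂q_{ns}|²`; thus the conjugate
gradient gives the direction of maximum rate of change. -/
theorem max_rate_of_change {N S : ℕ}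
    (f : (Fin N → Fin S → ℍ[ℝ]) → ℝ) (Q : Fin N → Fin S → ℍ[ℝ])
    (hf : DifferentiableAt ℝ f Q) :
    (∀ H : Fin N → Fin S → ℍ[ℝ],
      |fderiv ℝ f Q H| ≤
        4 * Real.sqrt (∑ n, ∑ s, ‖ghrER (1 : ℍ[ℝ]) f Q n s‖ ^ 2)
          * Real.sqrt (∑ n, ∑ s, ‖H n s‖ ^ 2))
    ∧ fderiv ℝ f Q (fun n s => star (ghrER (1 : ℍ[ℝ]) f Q n s)) =
        4 * ∑ n, ∑ s, ‖ghrER (1 : ℍ[ℝ]) f Q n s‖ ^ 2 :=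
  max_rate_of_change_general f Q
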